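/- arXiv:2501.00841 — 6 statements merged into one kernel-verified Lean document; each statement's English description precedes it below -/
import Mathlib

section
/- Let D, ξ ∈ ℝ with ξ ≠ 0 and ξ² ≠ 1. For n ∈ ℤ define t_n = D·ξ^(−n)·(ξ^(2n+1) − 1)/(ξ² − 1) and x_n = D·ξ^(−n)·(ξ^(2n+1) + 1)/(ξ² − 1). Then for every n ∈ ℤ, t_n² − x_n² = −4ξD²/(ξ² − 1)². In particular t_{n+1}² − x_{n+1}² = t_n² − x_n² for all n, so all the points (t_n, x_n) lie on one common hyperboloid t² − x² = const in 2-dimensional Minkowski space. -/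
/-- The intersection points `s_n = (t_n, x_n)` of adjacent walls in the
'moving wall' model of Misner space all lie on the common hyperboloid
`t² − x² = −4ξD²/(ξ² − 1)²`. -/
theorem moving_wall_intersections_on_hyperboloid (D ξ : ℝ)
    (hξ : ξ ≠ 0) (hξ1 : ξ ^ 2 ≠ 1)
    (t x : ℤ → ℝ)
    (ht : ∀ n : ℤ, t n = D * ξ ^ (-n) * (ξ ^ (2 * n + 1) - 1) / (ξ ^ 2 - 1))
    (hx : ∀ n : ℤ, x n = D * ξ ^ (-n) * (ξ ^ (2 * n + 1) + 1) / (ξ ^ 2 - 1)) :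
    (∀ n : ℤ, (t n) ^ 2 - (x n) ^ 2 = -4 * ξ * D ^ 2 / (ξ ^ 2 - 1) ^ 2) ∧
    (∀ n : ℤ, (t (n + 1)) ^ 2 - (x (n + 1)) ^ 2 = (t n) ^ 2 - (x n) ^ 2) := by
  have hden : ξ ^ 2 - 1 ≠ 0 := sub_ne_zero.mpr hξ1
  have key : ∀ n : ℤ, (t n) ^ 2 - (x n) ^ 2 = -4 * ξ * D ^ 2 / (ξ ^ 2 - 1) ^ 2 := by
    intro n
    have hab : (ξ ^ (-n)) ^ 2 * ξ ^ (2 * n + 1) = ξ := by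
      rw [← zpow_natCast (ξ ^ (-n)) 2, ← zpow_mul, ← zpow_add₀ hξ,
        show -n * (2 : ℕ) + (2 * n + 1) = 1 from by push_cast; ring, zpow_one]
    have h2 : t n ^ 2 - x n ^ 2
        = -4 * ((ξ ^ (-n)) ^ 2 * ξ ^ (2 * n + 1)) * D ^ 2 / (ξ ^ 2 - 1) ^ 2 := by
      rw [ht n, hx n]
      field_simp
      ring
    rw [h2, hab]
  exact ⟨key, fun n => by rw [key n, key (n + 1)]⟩
end

section
/- Let m, q ∈ ℝ with 0 < q < m, and set r₋ = m − √(m² − q²), r₊ = m + √(m² − q²), H(x) = 2m/x − q²/x² − 1. Let ν, r : ℝ → ℝ be differentiable functions with r(s) > 0 and r(s + 1) = r(s) for all s, and suppose that for every s: ν′(s) ≥ 0 and −H(r(s))·ν′(s)² + 2·ν′(s)·r′(s) < 0. Then r₋ < r(s) < r₊ for all s ∈ ℝ. -/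
private lemma pseudoRN_quad (m q x t : ℝ) (hq : 0 < q) (hmq : q < m)
    (ht : t = Real.sqrt (m ^ 2 - q ^ 2))
    (hx : 0 < x) (hHx : 0 < 2 * m / x - q ^ 2 / x ^ 2 - 1) :
    m - t < x ∧ x < m + t := by
  have ht2 : t ^ 2 = m ^ 2 - q ^ 2 := by rw [ht]; exact Real.sq_sqrt (by nlinarith)
  have ht0 : 0 ≤ t := by rw [ht]; exact Real.sqrt_nonneg _
  have hx' : x ≠ 0 := ne_of_gt hx
  have hpoly : x ^ 2 - 2 * m * x + q ^ 2 < 0 := by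
    have h1 : 0 < (2 * m / x - q ^ 2 / x ^ 2 - 1) * x ^ 2 := mul_pos hHx (by positivity)
    have e1 : (2 * m / x - q ^ 2 / x ^ 2 - 1) * x ^ 2 = 2 * m * x - q ^ 2 - x ^ 2 := by
      field_simp
    nlinarith [h1, e1]
  constructor <;> nlinarith [sq_nonneg (x - m + t), sq_nonneg (x - m - t)]

/-- Every closed timelike curve in the cylindrical pseudo-Reissner-Nordström
spacetime lies entirely inside the region `M₂ = {r₋ < r < r₊}` between the two
horizons. The closed curve is modeled by differentiable functions `ν, r` with
`r` periodic of period 1; future-pointing means `ν′ ≥ 0`, timelike means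
`−H(r)ν′² + 2ν′r′ < 0`. -/
theorem pseudoRN_CTC_in_M2 (m q : ℝ) (hq : 0 < q) (hmq : q < m)
    (rminus rplus : ℝ)
    (hrminus : rminus = m - Real.sqrt (m ^ 2 - q ^ 2))
    (hrplus : rplus = m + Real.sqrt (m ^ 2 - q ^ 2))
    (H : ℝ → ℝ) (hH : ∀ x, H x = 2 * m / x - q ^ 2 / x ^ 2 - 1)
    (ν r : ℝ → ℝ) (hν : Differentiable ℝ ν) (hr : Differentiable ℝ r)
    (hpos : ∀ s, 0 < r s) (hper : ∀ s, r (s + 1) = r s)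
    (hfut : ∀ s, 0 ≤ deriv ν s)
    (htl : ∀ s, -H (r s) * (deriv ν s) ^ 2 + 2 * deriv ν s * deriv r s < 0) :
    ∀ s : ℝ, rminus < r s ∧ r s < rplus := by
  -- the deriv of ν is strictly positive
  have hνpos : ∀ s, 0 < deriv ν s := by
    intro s
    rcases (hfut s).lt_or_eq with h | h
    · exact h
    · exfalso
      have := htl s
      rw [← h] at this
      simp at this
  -- at a critical point of r, H (r s) > 0, hence r s is between the horizons
  have hcrit : ∀ s, deriv r s = 0 → rminus < r s ∧ r s < rplus := by
    intro s hds
    have h1 := htl s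
    rw [hds] at h1
    have hHpos : 0 < H (r s) := by
      have hν2 : 0 < (deriv ν s) ^ 2 := pow_pos (hνpos s) 2
      nlinarith [h1, hν2]
    rw [hH (r s)] at hHpos
    have := pseudoRN_quad m q (r s) (Real.sqrt (m ^ 2 - q ^ 2)) hq hmq rfl (hpos s) hHpos
    rw [hrminus, hrplus]
    exact this
  -- periodicity: global bounds come from [0,1]
  have hp : Function.Periodic r 1 := hper
  have hfract : ∀ y : ℝ, r (Int.fract y) = r y := by
    intro y
    have h := hp.sub_int_mul_eq (x := y) ⌊y⌋
    rw [mul_one] at h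
    rw [Int.fract]
    exact h
  have hc : ContinuousOn r (Set.Icc (0:ℝ) 1) := hr.continuous.continuousOn
  have hne : (Set.Icc (0:ℝ) 1).Nonempty := Set.nonempty_Icc.2 zero_le_one
  obtain ⟨a, _, hamax⟩ := isCompact_Icc.exists_isMaxOn hne hc
  obtain ⟨b, _, hbmin⟩ := isCompact_Icc.exists_isMinOn hne hc
  -- a is a global max, b a global min
  have hglobmax : ∀ y, r y ≤ r a := by
    intro y
    rw [← hfract y]
    exact hamax (Set.mem_Icc.2 ⟨(Int.fract_nonneg y), le_of_lt (Int.fract_lt_one y)⟩)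
  have hglobmin : ∀ y, r b ≤ r y := by
    intro y
    rw [← hfract y]
    exact hbmin (Set.mem_Icc.2 ⟨(Int.fract_nonneg y), le_of_lt (Int.fract_lt_one y)⟩)
  have hda : deriv r a = 0 := by
    have : IsLocalMax r a := Filter.Eventually.of_forall hglobmax
    exact this.deriv_eq_zero
  have hdb : deriv r b = 0 := by
    have : IsLocalMin r b := Filter.Eventually.of_forall hglobmin
    exact this.deriv_eq_zero
  have ha := hcrit a hda
  have hb := hcrit b hdb
  intro s
  exact ⟨lt_of_lt_of_le hb.1 (hglobmin s), lt_of_le_of_lt (hglobmax s) ha.2⟩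
end

section
/- Let m, q ∈ ℝ with 0 < q < m, set r₋ = m − √(m² − q²), r₊ = m + √(m² − q²), H(x) = 2m/x − q²/x² − 1, and let α > 0 be the period of the ν-coordinate. Then for every r₀ with r₋ < r₀ < r₊, every ν₀ ∈ ℝ, and every positive integer n, the curve γ(s) = (ν₀ + n·α·s, r₀) for s ∈ [0,1] is a closed, future-pointing, timelike curve: its ν-component advances by the integer multiple n·α of the period (so γ is closed on the cylinder), its r-component is constant, its ν-derivative n·α is positive, and −H(r₀)·(n·α)² + 2·(n·α)·0 < 0. In particular, through every point of the region M₂ = {r₋ < r < r₊} there pass closed timelike curves with arbitrarily many windings. -/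
/-- Through every point of the region `M₂ = {r₋ < r < r₊}` of the cylindrical
pseudo-Reissner-Nordström spacetime (with `ν` periodic of period `α > 0`)
there pass closed, future-pointing, timelike curves
`γ(s) = (ν₀ + n·α·s, r₀)` with arbitrarily many windings `n`. -/
theorem pseudoRN_CTCs_through_every_point_of_M2 (m q : ℝ) (hq : 0 < q) (hmq : q < m)
    (rminus rplus : ℝ)
    (hrminus : rminus = m - Real.sqrt (m ^ 2 - q ^ 2))
    (hrplus : rplus = m + Real.sqrt (m ^ 2 - q ^ 2))
    (H : ℝ → ℝ) (hH : ∀ x, H x = 2 * m / x - q ^ 2 / x ^ 2 - 1)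
    (α : ℝ) (hα : 0 < α) :
    ∀ r₀ : ℝ, rminus < r₀ → r₀ < rplus → ∀ ν₀ : ℝ, ∀ n : ℕ, 0 < n →
      -- the ν-component advances by the integer multiple n·α of the period,
      -- so the curve closes up on the cylinder:
      (ν₀ + (n : ℝ) * α * 1) - (ν₀ + (n : ℝ) * α * 0) = (n : ℝ) * α ∧
      -- the ν-derivative is the constant n·α:
      (∀ s : ℝ, deriv (fun s => ν₀ + (n : ℝ) * α * s) s = (n : ℝ) * α) ∧
      -- the curve is future-pointing:
      (0 : ℝ) < (n : ℝ) * α ∧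
      -- and timelike (the r-component being constant, r′ = 0):
      -H r₀ * ((n : ℝ) * α) ^ 2 + 2 * ((n : ℝ) * α) * 0 < 0 := by
  intro r₀ h1 h2 ν₀ n hn
  have hm : 0 < m := hq.trans hmq
  have hdpos : (0:ℝ) < m ^ 2 - q ^ 2 := by nlinarith
  have hs : Real.sqrt (m ^ 2 - q ^ 2) ^ 2 = m ^ 2 - q ^ 2 := Real.sq_sqrt hdpos.le
  have hslt : Real.sqrt (m ^ 2 - q ^ 2) < m := by
    nlinarith [Real.sqrt_nonneg (m ^ 2 - q ^ 2)]
  have hr0 : 0 < r₀ := by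
    have : 0 < rminus := by rw [hrminus]; linarith
    linarith
  have hnα : (0:ℝ) < (n : ℝ) * α :=
    mul_pos (by exact_mod_cast hn) hα
  have hHpos : 0 < H r₀ := by
    rw [hH]
    rw [hrminus] at h1; rw [hrplus] at h2
    have key : r₀ ^ 2 - 2 * m * r₀ + q ^ 2 < 0 := by nlinarith
    have : 2 * m / r₀ - q ^ 2 / r₀ ^ 2 - 1 = -(r₀ ^ 2 - 2 * m * r₀ + q ^ 2) / r₀ ^ 2 := by
      field_simp; ring
    rw [this]
    exact div_pos (by linarith) (by positivity)
  refine ⟨by ring, fun s => ?_, hnα, by nlinarith [mul_pos hHpos (mul_pos hnα hnα)]⟩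
  have h := (((hasDerivAt_id s).const_mul ((n:ℝ)*α)).const_add ν₀).deriv
  simpa using h
end

section
/- Let m > 0 and set H(x) = 2m/x − 1. Let ν, r : ℝ → ℝ be differentiable functions with r(s) > 0 and r(s + 1) = r(s) for all s, and suppose that for every s: ν′(s) ≥ 0 and −H(r(s))·ν′(s)² + 2·ν′(s)·r′(s) < 0. Then r(s) < 2m for all s ∈ ℝ. -/
/-- There are no closed timelike curves in the region `M₁ = {r > 2m}` of the
cylindrical pseudo-Schwarzschild spacetime: every closed timelike curve lies
entirely in `M₂ = {0 < r < 2m}`. The closed curve is modeled by differentiable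
functions `ν, r` with `r` periodic of period 1; future-pointing means `ν′ ≥ 0`,
timelike means `−(2m/r − 1)ν′² + 2ν′r′ < 0`. -/
theorem pseudoSchwarzschild_CTC_in_M2 (m : ℝ) (hm : 0 < m)
    (H : ℝ → ℝ) (hH : ∀ x, H x = 2 * m / x - 1)
    (ν r : ℝ → ℝ) (hν : Differentiable ℝ ν) (hr : Differentiable ℝ r)
    (hpos : ∀ s, 0 < r s) (hper : ∀ s, r (s + 1) = r s)
    (hfut : ∀ s, 0 ≤ deriv ν s)
    (htl : ∀ s, -H (r s) * (deriv ν s) ^ 2 + 2 * deriv ν s * deriv r s < 0) :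
    ∀ s : ℝ, r s < 2 * m := by
  by_contra h
  push_neg at h
  obtain ⟨s₀, hs₀⟩ := h
  -- r attains а max on [s₀, s₀+1]
  obtain ⟨c, hc, hcm⟩ := (isCompact_Icc : IsCompact (Set.Icc s₀ (s₀ + 1))).exists_isMaxOn
    ⟨s₀, Set.left_mem_Icc.mpr (by linarith)⟩ hr.continuous.continuousOn
  have hcm' : ∀ t ∈ Set.Icc s₀ (s₀ + 1), r t ≤ r c := fun t ht => hcm ht
  -- max over [s₀, s₀+2] equals max over [s₀, s₀+1] by periodicity
  have hmax2 : ∀ t ∈ Set.Icc s₀ (s₀ + 2), r t ≤ r c := by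
    intro t ht
    rcases le_or_gt t (s₀ + 1) with h1 | h1
    · exact hcm' t ⟨ht.1, h1⟩
    · have : r t = r (t - 1) := by
        have := hper (t - 1); simpa using this
      rw [this]
      exact hcm' (t - 1) ⟨by linarith, by linarith [ht.2]⟩
  -- pick an interior max point
  set c' : ℝ := if c = s₀ then s₀ + 1 else c with hc'def
  have hrc' : r c' = r c := by
    by_cases hcs : c = s₀
    · simp [hc'def, hcs, hper s₀]
    · simp [hc'def, hcs]
  have hc'mem : c' ∈ Set.Ioo s₀ (s₀ + 2) := by
    by_cases hcs : c = s₀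
    · simp only [hc'def, if_pos hcs]; exact ⟨by linarith, by linarith⟩
    · simp only [hc'def, if_neg hcs]
      exact ⟨lt_of_le_of_ne hc.1 (Ne.symm hcs), by linarith [hc.2]⟩
  have hlocal : IsLocalMax r c' := by
    have hmem : Set.Ioo s₀ (s₀ + 2) ∈ nhds c' := Ioo_mem_nhds hc'mem.1 hc'mem.2
    exact Filter.eventually_of_mem hmem fun t ht => by
      rw [hrc']; exact hmax2 t ⟨le_of_lt ht.1, le_of_lt ht.2⟩
  have hderiv : deriv r c' = 0 := hlocal.deriv_eq_zero
  -- r c' ≥ 2m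
  have hge : 2 * m ≤ r c' := by
    rw [hrc']
    exact le_trans hs₀ (hcm' s₀ (Set.left_mem_Icc.mpr (by linarith)))
  have hdivle : 2 * m / r c' ≤ 1 := (div_le_one (hpos c')).mpr hge
  have := htl c'
  rw [hH, hderiv] at this
  nlinarith [sq_nonneg (deriv ν c')]
end

section
/- Let m > 0. There do not exist differentiable functions ν, r : ℝ → ℝ with r(s) > 0 and r(s + 1) = r(s) for all s, such that for every s: ν′(s) ≥ 0 and ((m − r(s))²/r(s)²)·ν′(s)² + 2·ν′(s)·r′(s) < 0. -/
/-- The extremal pseudo-Reissner-Nordström spacetime contains no closed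
timelike curves: there is no closed (period-1 in `r`) future-pointing curve
along which the quadratic form `((m − r)²/r²)ν′² + 2ν′r′` is strictly
negative. -/
theorem extremalRN_no_CTC (m : ℝ) (hm : 0 < m) :
    ¬ ∃ ν r : ℝ → ℝ, Differentiable ℝ ν ∧ Differentiable ℝ r ∧
      (∀ s, 0 < r s) ∧ (∀ s, r (s + 1) = r s) ∧
      (∀ s, 0 ≤ deriv ν s) ∧
      (∀ s, ((m - r s) ^ 2 / (r s) ^ 2) * (deriv ν s) ^ 2 +
        2 * deriv ν s * deriv r s < 0) := by
  rintro ⟨ν, r, hν, hr, hpos, hper, hd, htl⟩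
  have hr' : ∀ s, deriv r s < 0 := by
    intro s
    by_contra h
    push_neg at h
    have h1 : 0 ≤ ((m - r s) ^ 2 / (r s) ^ 2) * (deriv ν s) ^ 2 :=
      mul_nonneg (div_nonneg (sq_nonneg _) (sq_nonneg _)) (sq_nonneg _)
    have h2 : 0 ≤ 2 * deriv ν s * deriv r s :=
      mul_nonneg (mul_nonneg (by norm_num) (hd s)) h
    linarith [htl s]
  have : StrictAnti r := strictAnti_of_deriv_neg
    hr'
  have := this (show (0:ℝ) < 0 + 1 by norm_num)
  rw [hper 0] at this
  exact lt_irrefl _ this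
end

section
/- Let m > 0 and let ν, r : ℝ → ℝ be differentiable functions with r(s) > 0 for all s. Define T(s) = (r(s)/m − 2)·exp(r(s)/(2m)) and φ(s) = −ν(s)/(4m). Then for every s ∈ ℝ, −(2m/r(s) − 1)·ν′(s)² + 2·ν′(s)·r′(s) = Ω(r(s))·(−T′(s)·φ′(s) + T(s)·(φ′(s))²), where Ω(x) = 16m³·exp(−x/(2m))/x. -/
/-- Conformal relation between the cylindrical pseudo-Schwarzschild metric
`ds² = −(2m/r − 1)dν² + 2dν·dr` and the 2-dimensional Misner metric
`−dT·dφ + T·dφ²`: with `T = (r/m − 2)·e^{r/(2m)}`, `φ = −ν/(4m)` and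
conformal factor `Ω(x) = 16m³·e^{−x/(2m)}/x`, evaluated along an arbitrary
differentiable curve `s ↦ (ν s, r s)` with `r s > 0`. -/
theorem pseudoSchwarzschild_conformal_to_Misner (m : ℝ) (hm : 0 < m)
    (ν r : ℝ → ℝ) (hν : Differentiable ℝ ν) (hr : Differentiable ℝ r)
    (hpos : ∀ s, 0 < r s)
    (T φ : ℝ → ℝ)
    (hT : ∀ s, T s = (r s / m - 2) * Real.exp (r s / (2 * m)))
    (hφ : ∀ s, φ s = -ν s / (4 * m))
    (Ω : ℝ → ℝ) (hΩ : ∀ x, Ω x = 16 * m ^ 3 * Real.exp (-x / (2 * m)) / x) :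
    ∀ s : ℝ,
      -(2 * m / r s - 1) * (deriv ν s) ^ 2 + 2 * deriv ν s * deriv r s =
        Ω (r s) * (-(deriv T s) * deriv φ s + T s * (deriv φ s) ^ 2) := by
  intro s
  have hTfun : T = fun s => (r s / m - 2) * Real.exp (r s / (2 * m)) := funext hT
  have hφfun : φ = fun s => -ν s / (4 * m) := funext hφ
  have hr' : HasDerivAt r (deriv r s) s := (hr s).hasDerivAt
  have hν' : HasDerivAt ν (deriv ν s) s := (hν s).hasDerivAt
  have h1 : HasDerivAt (fun s => r s / m - 2) (deriv r s / m) s :=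
    (hr'.div_const m).sub_const 2
  have h2 : HasDerivAt (fun s => r s / (2 * m)) (deriv r s / (2 * m)) s :=
    hr'.div_const _
  have h3 : HasDerivAt (fun s => Real.exp (r s / (2 * m)))
      (Real.exp (r s / (2 * m)) * (deriv r s / (2 * m))) s := h2.exp
  have hTd : deriv T s = deriv r s / m * Real.exp (r s / (2 * m)) +
      (r s / m - 2) * (Real.exp (r s / (2 * m)) * (deriv r s / (2 * m))) := by
    rw [hTfun]; exact (h1.mul h3).deriv
  have hφd : deriv φ s = -deriv ν s / (4 * m) := by
    rw [hφfun]; exact (hν'.neg.div_const _).deriv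
  have hm0 : m ≠ 0 := ne_of_gt hm
  have hr0 : r s ≠ 0 := ne_of_gt (hpos s)
  have hex : Real.exp (r s / (2 * m)) ≠ 0 := Real.exp_ne_zero _
  rw [hTd, hφd, hT s, hΩ (r s),
    show -(r s) / (2 * m) = -(r s / (2 * m)) by ring, Real.exp_neg]
  field_simp
  ring
end
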